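/- Let p ≥ 1 and n > 6p + 2, and let d(x) be the determinant of the quadratic least-squares moment matrix for points x₁,…,xₙ. Then ∫_{ℝⁿ} d(x)^{-p} Γ(x₁)⋯Γ(xₙ) dx < ∞, where Γ is the standard Gaussian density. -/

import Mathlib

open Real MeasureTheory BigOperators

noncomputable def momentDet (n : ℕ) (x : Fin n → ℝ) : ℝ :=
  Matrix.det !![(n : ℝ), ∑ i, x i, ∑ i, (x i)^2;
                ∑ i, x i, ∑ i, (x i)^2, ∑ i, (x i)^3;
                ∑ i, (x i)^2, ∑ i, (x i)^3, ∑ i, (x i)^4]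

noncomputable def stdGauss (x : ℝ) : ℝ := Real.exp (-x^2 / 2) / Real.sqrt (2 * Real.pi)

/-!
By the identity `6 d = ∑ᵢⱼₖ ((xᵢ - xⱼ)(xᵢ - xₖ)(xⱼ - xₖ))²`, if `6 d < δ⁶` then among any three
points two are closer than `δ`, so all points lie within `δ` of two of them. Hence `{6 d < δ⁶}`
is covered by finitely many sets on which `n - 2` coordinates are confined to intervals of length
`2δ` centred at the other two coordinates, and each has Gaussian measure at most `(2δ)^(n - 2)`.
Taking `δ = 2^(1 - m)` gives `P(d ≤ 64^(-m)) ≲ 2^(-m (n - 2))`, and the dyadic layers of `d^(-p)`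
form a convergent series exactly when `2^(6p) < 2^(n - 2)`.
-/

open ProbabilityTheory Set Finset
open scoped ENNReal

namespace MeasureTheory

theorem lintegral_fin_nat_prod_eq_prod {n : ℕ} {E : Type*} [MeasurableSpace E]
    {μ : Fin n → Measure E} [∀ i, SigmaFinite (μ i)] {f : Fin n → E → ℝ≥0∞}
    (hf : ∀ i, Measurable (f i)) :
    ∫⁻ x, ∏ i, f i (x i) ∂Measure.pi μ = ∏ i, ∫⁻ y, f i y ∂μ i := by
  induction n with
  | zero => simp
  | succ n ih =>
      calc
        _ = ∫⁻ x : E × (Fin n → E), f 0 x.1 * ∏ i : Fin n, f i.succ (x.2 i)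
              ∂(μ 0).prod (Measure.pi fun i ↦ μ i.succ) := by
          rw [← ((measurePreserving_piFinSuccAbove μ 0).symm).lintegral_comp_emb
            (MeasurableEquiv.measurableEmbedding _)]
          simp_rw [MeasurableEquiv.piFinSuccAbove_symm_apply, Fin.insertNthEquiv,
            Fin.prod_univ_succ, Fin.insertNth_zero, Equiv.coe_fn_mk, Fin.cons_succ,
            Fin.zero_succAbove, cast_eq, Fin.cons_zero]
        _ = (∫⁻ y, f 0 y ∂μ 0) * ∏ i : Fin n, ∫⁻ y, f i.succ y ∂μ i.succ := by
          rw [← ih fun i ↦ hf i.succ, ← lintegral_prod_mul (hf 0).aemeasurable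
            (by fun_prop : Measurable fun x : Fin n → E ↦ ∏ i, f i.succ (x i)).aemeasurable]
        _ = ∏ i, ∫⁻ y, f i y ∂μ i := by rw [Fin.prod_univ_succ]

theorem lintegral_fintype_prod_eq_prod {ι : Type*} [Fintype ι] {E : Type*} [MeasurableSpace E]
    {μ : ι → Measure E} [∀ i, SigmaFinite (μ i)] {f : ι → E → ℝ≥0∞}
    (hf : ∀ i, Measurable (f i)) :
    ∫⁻ x, ∏ i, f i (x i) ∂Measure.pi μ = ∏ i, ∫⁻ y, f i y ∂μ i := by
  let e := (Fintype.equivFin ι).symm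
  rw [← (measurePreserving_piCongrLeft _ e).lintegral_comp_emb
    (MeasurableEquiv.measurableEmbedding _)]
  simp_rw [← e.prod_comp, MeasurableEquiv.coe_piCongrLeft, Equiv.piCongrLeft_apply_apply]
  exact lintegral_fin_nat_prod_eq_prod fun i ↦ hf (e i)

theorem pi_withDensity {ι : Type*} [Fintype ι] {E : Type*} [MeasurableSpace E]
    {μ : ι → Measure E} [∀ i, SigmaFinite (μ i)] {f : ι → E → ℝ≥0∞} (hf : ∀ i, Measurable (f i))
    [∀ i, SigmaFinite ((μ i).withDensity (f i))] :
    Measure.pi (fun i ↦ (μ i).withDensity (f i)) =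
      (Measure.pi μ).withDensity fun x ↦ ∏ i, f i (x i) := by
  refine Measure.pi_eq fun s hs ↦ ?_
  rw [withDensity_apply _ (MeasurableSet.univ_pi hs), Measure.restrict_pi_pi,
    lintegral_fintype_prod_eq_prod (μ := fun i ↦ (μ i).restrict (s i)) hf]
  simp_rw [withDensity_apply _ (hs _)]

end MeasureTheory

theorem stdGauss_eq_gaussianPDFReal : stdGauss = gaussianPDFReal 0 1 := by
  ext x
  simp [stdGauss, gaussianPDFReal, div_eq_inv_mul]

theorem pi_gaussianReal_eq_withDensity (ι : Type*) [Fintype ι] :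
    Measure.pi (fun _ : ι ↦ gaussianReal 0 1) =
      volume.withDensity fun x ↦ ∏ i, ENNReal.ofReal (stdGauss (x i)) := by
  rw [volume_pi, stdGauss_eq_gaussianPDFReal,
    ← pi_withDensity fun _ ↦ (measurable_gaussianPDFReal 0 1).ennreal_ofReal]
  simp_rw [gaussianReal_of_var_ne_zero 0 one_ne_zero]
  rfl

@[fun_prop]
theorem continuous_stdGauss : Continuous stdGauss := by
  unfold stdGauss
  fun_prop

theorem stdGauss_nonneg (x : ℝ) : 0 ≤ stdGauss x :=
  stdGauss_eq_gaussianPDFReal ▸ gaussianPDFReal_nonneg 0 1 x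

theorem integrable_mul_prod_stdGauss_iff {ι : Type*} [Fintype ι] {g : (ι → ℝ) → ℝ} :
    Integrable (fun x ↦ g x * ∏ i, stdGauss (x i)) ↔
      Integrable g (Measure.pi fun _ : ι ↦ gaussianReal 0 1) := by
  rw [pi_gaussianReal_eq_withDensity, integrable_withDensity_iff_integrable_smul'
    (by fun_prop) (ae_of_all _ fun x ↦ ENNReal.prod_lt_top fun _ _ ↦ ENNReal.ofReal_lt_top)]
  simp [ENNReal.toReal_prod, ENNReal.toReal_ofReal (stdGauss_nonneg _), mul_comm]

theorem gaussianPDFReal_zero_one_le_one (x : ℝ) : gaussianPDFReal 0 1 x ≤ 1 := by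
  simp only [gaussianPDFReal_def, NNReal.coe_one, mul_one, sub_zero]
  refine mul_le_one₀ (inv_le_one_of_one_le₀ ?_) (exp_pos _).le (exp_le_one_iff.mpr ?_)
  · exact one_le_sqrt.mpr (by linarith [pi_gt_three])
  · have := sq_nonneg x
    linarith

theorem gaussianReal_zero_one_le_volume : gaussianReal 0 1 ≤ volume := by
  refine Measure.le_iff'.mpr fun s ↦ ?_
  rw [gaussianReal_apply 0 one_ne_zero, ← setLIntegral_one]
  exact lintegral_mono fun x ↦ ENNReal.ofReal_le_one.mpr (gaussianPDFReal_zero_one_le_one x)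

theorem gaussianReal_zero_one_Icc_le (t L : ℝ) :
    gaussianReal 0 1 (Icc (t - L) (t + L)) ≤ ENNReal.ofReal (2 * L) := by
  refine (gaussianReal_zero_one_le_volume _).trans_eq ?_
  rw [volume_Icc]
  ring_nf

theorem prod_pi_setOf_forall_mem_Icc_le {X κ : Type*} [MeasurableSpace X] [Fintype κ]
    (ν : Measure X) [IsProbabilityMeasure ν] (μ : Measure ℝ) [SigmaFinite μ] {f : X → κ → ℝ}
    (hf : Measurable f) {L : ℝ} {K : ℝ≥0∞} (hK : ∀ t, μ (Icc (t - L) (t + L)) ≤ K) :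
    ν.prod (Measure.pi fun _ ↦ μ) {q | ∀ k, q.2 k ∈ Icc (f q.1 k - L) (f q.1 k + L)} ≤
      K ^ Fintype.card κ := by
  have hmeas :
      MeasurableSet {q : X × (κ → ℝ) | ∀ k, q.2 k ∈ Icc (f q.1 k - L) (f q.1 k + L)} := by
    simp only [ofPred_forall]
    refine MeasurableSet.iInter fun k ↦ ?_
    have hfk : Measurable fun q : X × (κ → ℝ) ↦ f q.1 k := by fun_prop
    have hk : Measurable fun q : X × (κ → ℝ) ↦ q.2 k := by fun_prop
    exact (measurableSet_le (hfk.sub_const L) hk).inter (measurableSet_le hk (hfk.add_const L))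
  rw [Measure.prod_apply hmeas]
  calc ∫⁻ y, Measure.pi (fun _ ↦ μ) (Prod.mk y ⁻¹' _) ∂ν
      = ∫⁻ y, ∏ k, μ (Icc (f y k - L) (f y k + L)) ∂ν := by
        congr 1 with y
        rw [← Measure.pi_pi]
        congr 1 with z
        simp only [Set.mem_preimage, Set.mem_univ_pi, Set.mem_ofPred_eq]
    _ ≤ ∫⁻ _, K ^ Fintype.card κ ∂ν := by
        refine lintegral_mono fun y ↦ ?_
        rw [← Finset.card_univ, ← Finset.prod_const]
        exact Finset.prod_le_prod' fun k _ ↦ hK _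
    _ = K ^ Fintype.card κ := by simp

theorem pi_setOf_forall_abs_sub_le_le {ι : Type*} [Fintype ι] [DecidableEq ι] (μ : Measure ℝ)
    [IsProbabilityMeasure μ] {S : Finset ι} {c : ι → ι} (hc : ∀ i ∉ S, c i ∈ S) {L : ℝ}
    {K : ℝ≥0∞} (hK : ∀ t, μ (Icc (t - L) (t + L)) ≤ K) :
    Measure.pi (fun _ ↦ μ) {x | ∀ i ∉ S, |x i - x (c i)| ≤ L} ≤
      K ^ (Fintype.card ι - #S) := by
  have hpres := measurePreserving_piEquivPiSubtypeProd (fun _ : ι ↦ μ) (· ∈ S)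
  have hset : {x : ι → ℝ | ∀ i ∉ S, |x i - x (c i)| ≤ L} =
      MeasurableEquiv.piEquivPiSubtypeProd (fun _ ↦ ℝ) (· ∈ S) ⁻¹'
        {q | ∀ k : {i // i ∉ S},
          q.2 k ∈ Icc (q.1 ⟨c k, hc k k.2⟩ - L) (q.1 ⟨c k, hc k k.2⟩ + L)} := by
    ext x
    simp [abs_sub_le_iff, and_comm, add_comm]
  rw [hset, hpres.measure_preimage_equiv, ← Fintype.card_coe, ← Fintype.card_subtype_compl]
  exact prod_pi_setOf_forall_mem_Icc_le
    (f := fun (y : S → ℝ) (k : {i // i ∉ S}) ↦ y ⟨c k, hc k k.2⟩) _ μ (by fun_prop) hK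

theorem sum_quartic {ι : Type*} [Fintype ι] (x : ι → ℝ) (c₀ c₁ c₂ c₃ c₄ : ℝ) :
    ∑ k, (c₄ * x k ^ 4 + c₃ * x k ^ 3 + c₂ * x k ^ 2 + c₁ * x k + c₀) =
      c₄ * ∑ k, x k ^ 4 + c₃ * ∑ k, x k ^ 3 + c₂ * ∑ k, x k ^ 2 + c₁ * ∑ k, x k +
        Fintype.card ι * c₀ := by
  simp [Finset.sum_add_distrib, ← Finset.mul_sum, Finset.card_univ]

theorem continuous_momentDet (n : ℕ) : Continuous (momentDet n) := by
  unfold momentDet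
  fun_prop

theorem six_mul_momentDet (n : ℕ) (x : Fin n → ℝ) :
    6 * momentDet n x = ∑ i, ∑ j, ∑ k, ((x i - x j) * (x i - x k) * (x j - x k)) ^ 2 := by
  set s₁ := ∑ i, x i
  set s₂ := ∑ i, x i ^ 2
  set s₃ := ∑ i, x i ^ 3
  set s₄ := ∑ i, x i ^ 4
  have sum_inner (a b : ℝ) : ∑ k, ((a - b) * (a - x k) * (b - x k)) ^ 2 =
      (s₂ - 2 * a * s₁ + a ^ 2 * n) * b ^ 4
        + (-2 * s₃ + 2 * a * s₂ + 2 * a ^ 2 * s₁ - 2 * a ^ 3 * n) * b ^ 3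
        + (s₄ + 2 * a * s₃ - 6 * a ^ 2 * s₂ + 2 * a ^ 3 * s₁ + a ^ 4 * n) * b ^ 2
        + (-2 * a * s₄ + 2 * a ^ 2 * s₃ + 2 * a ^ 3 * s₂ - 2 * a ^ 4 * s₁) * b
        + (a ^ 2 * s₄ - 2 * a ^ 3 * s₃ + a ^ 4 * s₂) := by
    have hk (k : Fin n) : ((a - b) * (a - x k) * (b - x k)) ^ 2 =
        (a - b) ^ 2 * x k ^ 4 + (-2 * (a + b) * (a - b) ^ 2) * x k ^ 3
          + (((a + b) ^ 2 + 2 * a * b) * (a - b) ^ 2) * x k ^ 2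
          + (-2 * a * b * (a + b) * (a - b) ^ 2) * x k + a ^ 2 * b ^ 2 * (a - b) ^ 2 := by ring
    simp_rw [hk, sum_quartic, Fintype.card_fin]
    ring
  have sum_middle (a : ℝ) : ∑ j, ∑ k, ((a - x j) * (a - x k) * (x j - x k)) ^ 2 =
      (2 * n * s₂ - 2 * s₁ ^ 2) * a ^ 4 + (4 * s₁ * s₂ - 4 * n * s₃) * a ^ 3
        + (2 * n * s₄ + 4 * s₁ * s₃ - 6 * s₂ ^ 2) * a ^ 2 + (4 * s₂ * s₃ - 4 * s₁ * s₄) * a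
        + (2 * s₂ * s₄ - 2 * s₃ ^ 2) := by
    simp_rw [sum_inner, sum_quartic, Fintype.card_fin]
    ring
  simp_rw [sum_middle, sum_quartic, Fintype.card_fin]
  simp only [momentDet, Matrix.det_fin_three, Matrix.of_apply, Matrix.cons_val',
    Matrix.cons_val_zero, Matrix.cons_val_fin_one, Matrix.cons_val_one, Matrix.cons_val]
  ring

theorem sq_mul_sub_le_six_mul_momentDet {n : ℕ} (x : Fin n → ℝ) (i j k : Fin n) :
    ((x i - x j) * (x i - x k) * (x j - x k)) ^ 2 ≤ 6 * momentDet n x := by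
  rw [six_mul_momentDet]
  refine le_trans ?_ (single_le_sum (fun _ _ ↦ by positivity) (mem_univ i))
  refine le_trans ?_ (single_le_sum (fun _ _ ↦ by positivity) (mem_univ j))
  exact single_le_sum (f := fun k ↦ ((x i - x j) * (x i - x k) * (x j - x k)) ^ 2)
    (fun _ _ ↦ by positivity) (mem_univ k)

theorem momentDet_nonneg {n : ℕ} (x : Fin n → ℝ) : 0 ≤ momentDet n x := by
  have := six_mul_momentDet n x
  have : 0 ≤ ∑ i, ∑ j, ∑ k, ((x i - x j) * (x i - x k) * (x j - x k)) ^ 2 := by positivity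
  linarith

theorem abs_sub_lt_of_six_mul_momentDet_lt {n : ℕ} {x : Fin n → ℝ} {δ : ℝ} (hδ : 0 ≤ δ)
    (h : 6 * momentDet n x < δ ^ 6) (i j k : Fin n) :
    |x i - x j| < δ ∨ |x i - x k| < δ ∨ |x j - x k| < δ := by
  by_contra! hfar
  obtain ⟨hij, hik, hjk⟩ := hfar
  have : δ ^ 6 ≤ ((x i - x j) * (x i - x k) * (x j - x k)) ^ 2 :=
    calc δ ^ 6 = (δ * δ * δ) ^ 2 := by ring
      _ ≤ (|x i - x j| * |x i - x k| * |x j - x k|) ^ 2 := by gcongr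
      _ = _ := by rw [← abs_mul, ← abs_mul, sq_abs]
  linarith [sq_mul_sub_le_six_mul_momentDet x i j k]

/-- If some two points are at distance `≥ δ`, they serve as the two centres; otherwise any two
do. -/
theorem exists_pair_forall_abs_sub_lt {ι : Type*} [Nontrivial ι] (x : ι → ℝ) {δ : ℝ}
    (h : ∀ i j k, |x i - x j| < δ ∨ |x i - x k| < δ ∨ |x j - x k| < δ) :
    ∃ a b, a ≠ b ∧ ∀ i, |x i - x a| < δ ∨ |x i - x b| < δ := by
  by_cases hfar : ∃ a b, δ ≤ |x a - x b|
  · obtain ⟨a, b, hab⟩ := hfar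
    refine ⟨a, b, ?_, fun i ↦ ?_⟩
    · rintro rfl
      have := h a a a
      simp only [sub_self, abs_zero, or_self] at this hab
      linarith
    · rcases h a b i with h | h | h
      · exact absurd h hab.not_gt
      · exact Or.inl (abs_sub_comm (x a) (x i) ▸ h)
      · exact Or.inr (abs_sub_comm (x b) (x i) ▸ h)
  · push Not at hfar
    obtain ⟨a, b, hab⟩ := exists_pair_ne ι
    exact ⟨a, b, hab, fun i ↦ Or.inl (hfar i a)⟩

theorem pi_setOf_six_mul_momentDet_lt_le {n : ℕ} (hn : 2 ≤ n) (μ : Measure ℝ)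
    [IsProbabilityMeasure μ] {δ : ℝ} (hδ : 0 ≤ δ) {K : ℝ≥0∞}
    (hK : ∀ t, μ (Icc (t - δ) (t + δ)) ≤ K) :
    Measure.pi (fun _ ↦ μ) {x | 6 * momentDet n x < δ ^ 6} ≤
      Fintype.card (Finset (Fin n) × (Fin n → Fin n)) * K ^ (n - 2) := by
  have : Nontrivial (Fin n) := Fin.nontrivial_iff_two_le.mpr hn
  set T := univ.filter fun Sc : Finset (Fin n) × (Fin n → Fin n) ↦
    #Sc.1 = 2 ∧ ∀ i ∉ Sc.1, Sc.2 i ∈ Sc.1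
  have hcover : {x | 6 * momentDet n x < δ ^ 6} ⊆
      ⋃ Sc ∈ T, {x | ∀ i ∉ Sc.1, |x i - x (Sc.2 i)| ≤ δ} := by
    intro x hx
    obtain ⟨a, b, hab, hclose⟩ :=
      exists_pair_forall_abs_sub_lt x (abs_sub_lt_of_six_mul_momentDet_lt hδ hx)
    let c i := if |x i - x a| < δ then a else b
    refine mem_iUnion₂.mpr ⟨({a, b}, c), ?_, fun i _ ↦ ?_⟩
    · refine mem_filter.mpr ⟨mem_univ _, card_pair hab, fun i _ ↦ ?_⟩
      by_cases hi : |x i - x a| < δ <;> simp [c, hi]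
    · by_cases hi : |x i - x a| < δ
      · simpa [c, hi] using hi.le
      · simpa [c, hi] using ((hclose i).resolve_left hi).le
  calc _ ≤ _ := measure_mono hcover
    _ ≤ ∑ Sc ∈ T, Measure.pi (fun _ ↦ μ) {x | ∀ i ∉ Sc.1, |x i - x (Sc.2 i)| ≤ δ} :=
        measure_biUnion_finset_le _ _
    _ ≤ ∑ _Sc ∈ T, K ^ (n - 2) := by
        refine sum_le_sum fun Sc hSc ↦ ?_
        obtain ⟨hcard, hc⟩ := (mem_filter.mp hSc).2
        simpa [hcard] using pi_setOf_forall_abs_sub_le_le μ hc hK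
    _ ≤ _ := by
        rw [sum_const, nsmul_eq_mul]
        gcongr
        exact_mod_cast card_filter_le _ _

theorem ofReal_rpow_neg_le_tsum {t p b : ℝ} (ht : 0 ≤ t) (hp : 0 ≤ p) (hb : 1 < b) :
    ENNReal.ofReal (t ^ (-p)) ≤
      1 + ∑' m : ℕ, ENNReal.ofReal (b ^ p) ^ (m + 1) * (Iic (b ^ m)⁻¹).indicator 1 t := by
  by_cases hsmall : 0 < t ∧ t ≤ 1
  · obtain ⟨ht0, ht1⟩ := hsmall
    obtain ⟨m, hm, hm'⟩ := exists_nat_pow_near (one_le_inv₀ ht0 |>.mpr ht1) hb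
    have hmem : t ∈ Iic (b ^ m)⁻¹ := (le_inv_comm₀ (by positivity) ht0).mp hm
    have hbound : t ^ (-p) ≤ (b ^ p) ^ (m + 1) := by
      rw [rpow_neg ht, ← inv_rpow ht, rpow_pow_comm (by positivity)]
      exact rpow_le_rpow (by positivity) hm'.le hp
    calc ENNReal.ofReal (t ^ (-p)) ≤ ENNReal.ofReal (b ^ p) ^ (m + 1) := by
          rw [← ENNReal.ofReal_pow (by positivity)]
          exact ENNReal.ofReal_le_ofReal hbound
      _ = ENNReal.ofReal (b ^ p) ^ (m + 1) * (Iic (b ^ m)⁻¹).indicator 1 t := by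
          simp [indicator_of_mem hmem]
      _ ≤ _ := (ENNReal.le_tsum m).trans le_add_self
  · refine le_trans ?_ le_self_add
    refine ENNReal.ofReal_le_one.mpr ?_
    rcases ht.eq_or_lt with rfl | ht0
    · exact zero_rpow_le_one _
    · exact rpow_le_one_of_one_le_of_nonpos (not_le.mp (hsmall ⟨ht0, ·⟩)).le (by linarith)

theorem lintegral_ofReal_rpow_neg_lt_top {X : Type*} [MeasurableSpace X] (μ : Measure X)
    [IsFiniteMeasure μ] {f : X → ℝ} (hf : Measurable f) (hf₀ : ∀ x, 0 ≤ f x) {p b : ℝ}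
    (hp : 0 ≤ p) (hb : 1 < b) {C ρ : ℝ≥0∞} (hC : C ≠ ⊤) (hρ : ENNReal.ofReal (b ^ p) * ρ < 1)
    (htail : ∀ m : ℕ, μ {x | f x ≤ (b ^ m)⁻¹} ≤ C * ρ ^ m) :
    ∫⁻ x, ENNReal.ofReal (f x ^ (-p)) ∂μ < ⊤ := by
  set c := ENNReal.ofReal (b ^ p)
  have hmeas (m : ℕ) : MeasurableSet {x | f x ≤ (b ^ m)⁻¹} :=
    measurableSet_le hf measurable_const
  calc ∫⁻ x, ENNReal.ofReal (f x ^ (-p)) ∂μ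
      ≤ ∫⁻ x, 1 + ∑' m : ℕ, c ^ (m + 1) * {x | f x ≤ (b ^ m)⁻¹}.indicator 1 x ∂μ :=
        lintegral_mono fun x ↦ ofReal_rpow_neg_le_tsum (hf₀ x) hp hb
    _ = μ univ + ∑' m : ℕ, c ^ (m + 1) * μ {x | f x ≤ (b ^ m)⁻¹} := by
        rw [lintegral_add_left measurable_const, lintegral_tsum fun m ↦
          ((measurable_one.indicator (hmeas m)).const_mul _).aemeasurable]
        simp_rw [lintegral_const_mul _ (measurable_one.indicator (hmeas _)),
          lintegral_indicator_one (hmeas _), lintegral_const, one_mul]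
    _ ≤ μ univ + ∑' m : ℕ, c * C * (c * ρ) ^ m := by
        refine add_le_add_right (ENNReal.tsum_le_tsum fun m ↦ ?_) _
        calc c ^ (m + 1) * μ {x | f x ≤ (b ^ m)⁻¹} ≤ c ^ (m + 1) * (C * ρ ^ m) := by
              gcongr; exact htail m
          _ = c * C * (c * ρ) ^ m := by ring
    _ < ⊤ := by
        rw [ENNReal.tsum_mul_left]
        have := tsum_geometric_lt_top.mpr hρ
        finiteness

theorem lintegral_ofReal_momentDet_rpow_neg_lt_top {n : ℕ} {p : ℝ} (hp : 0 ≤ p)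
    (hn : 6 * p + 2 < n) :
    ∫⁻ x, ENNReal.ofReal (momentDet n x ^ (-p)) ∂Measure.pi (fun _ : Fin n ↦ gaussianReal 0 1) <
      ⊤ := by
  have hn₂ : 2 ≤ n := by exact_mod_cast (show (2 : ℝ) ≤ n by linarith)
  set N := Fintype.card (Finset (Fin n) × (Fin n → Fin n))
  refine lintegral_ofReal_rpow_neg_lt_top _ (continuous_momentDet n).measurable momentDet_nonneg
    hp (b := 64) (by norm_num) (C := N * ENNReal.ofReal (4 ^ (n - 2)))
    (ρ := ENNReal.ofReal (2 ^ (n - 2))⁻¹) (by finiteness) ?_ fun m ↦ ?_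
  · rw [← ENNReal.ofReal_mul (by positivity), ENNReal.ofReal_lt_one,
      mul_inv_lt_iff₀ (by positivity), one_mul, show (64 : ℝ) = 2 ^ (6 : ℝ) by norm_num,
      ← rpow_mul (by norm_num), ← rpow_natCast,
      rpow_lt_rpow_left_iff one_lt_two, Nat.cast_sub hn₂]
    push_cast
    linarith
  · have hδ6 : ((2 : ℝ) / 2 ^ m) ^ 6 = 64 * (64 ^ m)⁻¹ := by
      rw [div_pow, ← pow_mul, mul_comm m, pow_mul]
      norm_num [div_eq_mul_inv]
    calc _ ≤ Measure.pi (fun _ ↦ gaussianReal 0 1)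
          {x | 6 * momentDet n x < (2 / 2 ^ m) ^ 6} := by
          refine measure_mono fun x (hx : momentDet n x ≤ _) ↦ ?_
          have : (0 : ℝ) < (64 ^ m)⁻¹ := by positivity
          show 6 * momentDet n x < _
          rw [hδ6]
          linarith
      _ ≤ N * ENNReal.ofReal (2 * (2 / 2 ^ m)) ^ (n - 2) :=
          pi_setOf_six_mul_momentDet_lt_le hn₂ _ (by positivity) fun t ↦
            gaussianReal_zero_one_Icc_le t _
      _ = N * ENNReal.ofReal (4 ^ (n - 2)) * ENNReal.ofReal (2 ^ (n - 2))⁻¹ ^ m := by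
          rw [← ENNReal.ofReal_pow (by positivity), ← ENNReal.ofReal_pow (by positivity),
            mul_assoc, ← ENNReal.ofReal_mul (by positivity)]
          congr 2
          field_simp
          ring

theorem integrable_momentDet_rpow_neg {n : ℕ} {p : ℝ} (hp : 0 ≤ p) (hn : 6 * p + 2 < n) :
    Integrable (fun x ↦ momentDet n x ^ (-p)) (Measure.pi fun _ : Fin n ↦ gaussianReal 0 1) := by
  refine ⟨((continuous_momentDet n).measurable.pow_const _).aestronglyMeasurable, ?_⟩
  rw [hasFiniteIntegral_iff_ofReal (ae_of_all _ fun x ↦ rpow_nonneg (momentDet_nonneg x) _)]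
  exact lintegral_ofReal_momentDet_rpow_neg_lt_top hp hn

theorem stmt15 (p : ℝ) (hp : 1 ≤ p) (n : ℕ) (hn : (n : ℝ) > 6 * p + 2) :
    Integrable (fun x : Fin n → ℝ =>
      momentDet n x ^ (-p) * ∏ i, stdGauss (x i)) (volume) := by
  rw [integrable_mul_prod_stdGauss_iff]
  exact integrable_momentDet_rpow_neg (by linarith) hn
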